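/- Let S be a commutative ring and u, π, τ ∈ S such that for every m ≥ 1 the image of u in S/τᵐS is a non-zero-divisor. Suppose (c'_j)_{j≥0} and (d_j)_{j≥1} are elements of S satisfying d_j·τʲ = π·τ·c'_{j−1} − u·c'_j for every j ≥ 1. Then c'_j ∈ τʲS for every j ≥ 1. -/

import Mathlib

theorem Ideal.mem_of_mul_mem_of_mk_mem_nonZeroDivisors {S : Type*} [CommRing S] {I : Ideal S}
    {u x : S} (hu : Ideal.Quotient.mk I u ∈ nonZeroDivisors (S ⧸ I)) (hux : u * x ∈ I) :
    x ∈ I := by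
  rw [← Ideal.Quotient.eq_zero_iff_mem] at hux ⊢
  rw [map_mul] at hux
  exact mem_nonZeroDivisors_iff_left.mp hu _ hux

theorem mem_span_pow_succ_of_rec_step {S : Type*} [CommRing S] {u π τ c c' d : S} {k : ℕ}
    (hu : Ideal.Quotient.mk (Ideal.span {τ ^ (k + 1)}) u ∈
      nonZeroDivisors (S ⧸ Ideal.span {τ ^ (k + 1)}))
    (hc : c ∈ Ideal.span {τ ^ k}) (h : d * τ ^ (k + 1) = π * τ * c - u * c') :
    c' ∈ Ideal.span {τ ^ (k + 1)} := by
  refine Ideal.mem_of_mul_mem_of_mk_mem_nonZeroDivisors hu ?_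
  rw [Ideal.mem_span_singleton] at hc ⊢
  have hτc : τ ^ (k + 1) ∣ π * τ * c := by
    rw [pow_succ', mul_assoc]
    exact dvd_mul_of_dvd_right (mul_dvd_mul_left τ hc) π
  rw [show u * c' = π * τ * c - d * τ ^ (k + 1) by linear_combination h]
  exact dvd_sub hτc (dvd_mul_left _ _)

/-- **Divisibility propagation from a recurrence.**
Let `S` be a commutative ring and `u, π, τ ∈ S` such that for every `m ≥ 1` the image of
`u` in `S/τᵐS` is a non-zero-divisor.  Suppose `(c'_j)_{j≥0}` and `(d_j)_{j≥1}` satisfy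
`d_j·τʲ = π·τ·c'_{j−1} − u·c'_j` for every `j ≥ 1`.  Then `c'_j ∈ τʲS` for every `j ≥ 1`
(stated below with the index shift `j = k + 1`). -/
theorem mem_span_pow_of_rec'
    {S : Type*} [CommRing S] (u π τ : S)
    (hu : ∀ m : ℕ, 1 ≤ m →
      Ideal.Quotient.mk (Ideal.span {τ ^ m}) u ∈ nonZeroDivisors (S ⧸ Ideal.span {τ ^ m}))
    (c' d : ℕ → S)
    (h : ∀ k : ℕ, d (k + 1) * τ ^ (k + 1) = π * τ * c' k - u * c' (k + 1)) :
    ∀ k : ℕ, c' (k + 1) ∈ Ideal.span {τ ^ (k + 1)} := by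
  have hc' : ∀ k, c' k ∈ Ideal.span {τ ^ k} := by
    intro k
    induction k with
    | zero => simp
    | succ k ih => exact mem_span_pow_succ_of_rec_step (hu (k + 1) k.succ_pos) ih (h k)
  exact fun k => hc' (k + 1)
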